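/- If θ < κ < λ are infinite regular cardinals, then □^κ(λ) implies □^θ(λ). -/

import Mathlib

noncomputable section

open Cardinal Set

namespace Paper

/-- `C` is a club (closed and unbounded set) in the ordinal `α`. -/
def IsClubIn (C : Set Ordinal) (α : Ordinal) : Prop :=
  C ⊆ Set.Iio α ∧ (∀ γ < α, ∃ β ∈ C, γ ≤ β) ∧
    ∀ γ < α, 0 < γ → sSup (C ∩ Set.Iio γ) = γ → γ ∈ C

/-- `γ` is a limit point of `C`: it belongs to `C` and is the supremum of the
earlier elements of `C`. -/
def IsLimitPt (γ : Ordinal) (C : Set Ordinal) : Prop :=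
  γ ∈ C ∧ sSup (C ∩ Set.Iio γ) = γ

/-- The order type of a set of ordinals. -/
def otp (C : Set Ordinal) : Ordinal.{1} :=
  Ordinal.type (Subrel ((· < ·) : Ordinal → Ordinal → Prop) (· ∈ C))

/-- A `□(lam)`-sequence: clubs `C α ⊆ α` for limit `α < lam`, coherent, with
no thread. -/
structure SquareSeq (lam : Cardinal.{0}) where
  C : Ordinal → Set Ordinal
  club : ∀ α < lam.ord, Order.IsSuccLimit α → IsClubIn (C α) α
  coherent : ∀ α β, α < β → β < lam.ord → Order.IsSuccLimit α → Order.IsSuccLimit β →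
    IsLimitPt α (C β) → C β ∩ Set.Iio α = C α
  noThread : ¬ ∃ D, IsClubIn D lam.ord ∧
    ∀ α, Order.IsSuccLimit α → IsLimitPt α D → D ∩ Set.Iio α = C α

/-- `S` is stationary in `δ`: it meets every club in `δ`. -/
def StationaryIn (S : Set Ordinal) (δ : Ordinal) : Prop :=
  ∀ D, IsClubIn D δ → (S ∩ D).Nonempty

/-- `□^kap(lam)`: there is a `□(lam)`-sequence with `otp(C_α) < α` for
stationarily many `α ∈ S^lam_kap = {α < lam : cf(α) = kap}`. -/
def SqSup (lam kap : Cardinal.{0}) : Prop :=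
  ∃ sq : SquareSeq lam, StationaryIn
    {α | α < lam.ord ∧ α.cof = kap ∧ otp (sq.C α) < Ordinal.lift.{1} α} lam.ord

/-! ### Auxiliary lemmas -/

lemma bddAbove_of_subset_Iio {C : Set Ordinal.{0}} {γ : Ordinal.{0}} (h : C ⊆ Set.Iio γ) :
    BddAbove C :=
  bddAbove_Iio.mono h

lemma sSup_inter_Iio_le (C : Set Ordinal.{0}) (γ : Ordinal.{0}) : sSup (C ∩ Set.Iio γ) ≤ γ :=
  csSup_le' fun _ hx => hx.2.le

lemma nonempty_of_sSup_pos {s : Set Ordinal.{0}} (h : 0 < sSup s) : s.Nonempty := by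
  by_contra hne
  rw [Set.not_nonempty_iff_eq_empty] at hne
  rw [hne, csSup_empty] at h
  simp at h

lemma sSup_inter_eq_of_subset {s t : Set Ordinal.{0}} {γ : Ordinal.{0}} (hst : s ⊆ t)
    (h0 : 0 < γ) (h : sSup (s ∩ Set.Iio γ) = γ) : sSup (t ∩ Set.Iio γ) = γ := by
  have hne : (s ∩ Set.Iio γ).Nonempty := nonempty_of_sSup_pos (by rw [h]; exact h0)
  have hle := csSup_le_csSup (bddAbove_of_subset_Iio (Set.inter_subset_right))
    hne (Set.inter_subset_inter_left _ hst)
  rw [h] at hle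
  exact le_antisymm (sSup_inter_Iio_le _ _) hle

/-- The supremum of a nonempty subset of a club, if it is not attained and is below `δ`,
is a limit point of the club. -/
lemma isLimitPt_sSup {C : Set Ordinal.{0}} {δ : Ordinal.{0}} (hC : IsClubIn C δ)
    {s : Set Ordinal.{0}} (hsub : s ⊆ C) (hne : s.Nonempty) (hnot : sSup s ∉ s)
    (hlt : sSup s < δ) : IsLimitPt (sSup s) C := by
  set β := sSup s with hβ
  have hbdd : BddAbove s := bddAbove_of_subset_Iio (hsub.trans hC.1)
  have hsub2 : s ⊆ C ∩ Set.Iio β := fun x hx =>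
    ⟨hsub hx, lt_of_le_of_ne (le_csSup hbdd hx) (by rintro rfl; exact hnot hx)⟩
  have h1 : β ≤ sSup (C ∩ Set.Iio β) :=
    csSup_le_csSup (bddAbove_of_subset_Iio Set.inter_subset_right) hne hsub2
  have hsup : sSup (C ∩ Set.Iio β) = β := le_antisymm (sSup_inter_Iio_le _ _) h1
  have h0 : 0 < β := by
    obtain ⟨x, hx⟩ := hne
    exact lt_of_le_of_lt (zero_le (a := x)) (hsub2 hx).2
  exact ⟨hC.2.2 β hlt h0 hsup, hsup⟩

lemma IsClubIn.exists_gt {C : Set Ordinal.{0}} {δ : Ordinal.{0}} (hC : IsClubIn C δ)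
    (hδ : Order.IsSuccLimit δ) {γ : Ordinal.{0}} (hγ : γ < δ) : ∃ β ∈ C, γ < β := by
  obtain ⟨β, hβ, hle⟩ := hC.2.1 (Order.succ γ) (hδ.succ_lt hγ)
  exact ⟨β, hβ, lt_of_lt_of_le (Order.lt_succ γ) hle⟩

/-- Key chain construction: common limit points of two clubs above any `γ < δ`. -/
lemma exists_common_limitPt {A B : Set Ordinal.{0}} {δ : Ordinal.{0}} (hA : IsClubIn A δ)
    (hB : IsClubIn B δ) (hδ : Order.IsSuccLimit δ) (hcof : ℵ₀ < δ.cof) {γ : Ordinal.{0}} (hγ : γ < δ) :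
    ∃ β < δ, γ < β ∧ IsLimitPt β A ∧ IsLimitPt β B := by
  have keyA : ∀ x : Ordinal, ∃ y, x < δ → (y ∈ A ∧ x < y ∧ y < δ) := by
    intro x
    by_cases hx : x < δ
    · obtain ⟨y, hy, hxy⟩ := hA.exists_gt hδ hx
      exact ⟨y, fun _ => ⟨hy, hxy, hA.1 hy⟩⟩
    · exact ⟨0, fun hh => absurd hh hx⟩
  have keyB : ∀ x : Ordinal, ∃ y, x < δ → (y ∈ B ∧ x < y ∧ y < δ) := by
    intro x
    by_cases hx : x < δ
    · obtain ⟨y, hy, hxy⟩ := hB.exists_gt hδ hx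
      exact ⟨y, fun _ => ⟨hy, hxy, hB.1 hy⟩⟩
    · exact ⟨0, fun hh => absurd hh hx⟩
  choose FA hFA using keyA
  choose FB hFB using keyB
  -- one step goes through A then B
  let g : ℕ → Ordinal := fun n => Nat.rec (FB (FA γ)) (fun _ ih => FB (FA ih)) n
  have hg0 : g 0 = FB (FA γ) := rfl
  have hgs : ∀ n, g (n + 1) = FB (FA (g n)) := fun n => rfl
  have step : ∀ x, x < δ → γ ≤ x →
      FA x ∈ A ∧ x < FA x ∧ FA x < δ ∧ FB (FA x) ∈ B ∧ FA x < FB (FA x) ∧ FB (FA x) < δ := by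
    intro x hx _
    obtain ⟨h1, h2, h3⟩ := hFA x hx
    obtain ⟨h4, h5, h6⟩ := hFB (FA x) h3
    exact ⟨h1, h2, h3, h4, h5, h6⟩
  have main : ∀ n, γ < g n ∧ g n < δ ∧ g n ∈ B := by
    intro n
    induction n with
    | zero =>
      obtain ⟨_, h2, h3, h4, h5, h6⟩ := step γ hγ le_rfl
      exact ⟨h2.trans h5, h6, h4⟩
    | succ n ih =>
      obtain ⟨hγn, hnδ, _⟩ := ih
      obtain ⟨_, h2, h3, h4, h5, h6⟩ := step (g n) hnδ hγn.le
      rw [hgs]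
      exact ⟨hγn.trans (h2.trans h5), h6, h4⟩
  have hmono : ∀ n, g n < g (n + 1) := by
    intro n
    obtain ⟨hγn, hnδ, _⟩ := main n
    obtain ⟨_, h2, _, _, h5, _⟩ := step (g n) hnδ hγn.le
    rw [hgs]
    exact h2.trans h5
  have hβδ' : (⨆ n, g n) < δ :=
    Ordinal.iSup_lt_ord (a := δ) (f := g) (by rwa [Cardinal.mk_nat]) fun n => (main n).2.1
  set β := ⨆ n, g n with hβ
  have hβδ : β < δ := hβδ'

  have hbddg : BddAbove (Set.range g) :=
    bddAbove_of_subset_Iio (by rintro x ⟨n, rfl⟩; exact (main n).2.1)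
  have hle_iSup : ∀ n, g n ≤ β := fun n => le_csSup hbddg ⟨n, rfl⟩
  have hγβ : γ < β := lt_of_lt_of_le (main 0).1 (hle_iSup 0)
  have h0β : 0 < β := lt_of_le_of_lt (zero_le (a := γ)) hγβ
  -- β is a limit point of A
  have hsupA : sSup (A ∩ Set.Iio β) = β := by
    refine le_antisymm (sSup_inter_Iio_le _ _) ?_
    rw [hβ]
    refine csSup_le (Set.range_nonempty g) ?_
    rintro x ⟨n, rfl⟩
    obtain ⟨hγn, hnδ, _⟩ := main n
    obtain ⟨h1, h2, _, _, h5, _⟩ := step (g n) hnδ hγn.le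
    have hFAlt : FA (g n) < β := lt_of_lt_of_le (h5.trans_le (by rw [← hgs]; exact hle_iSup (n+1)))
      le_rfl
    exact le_trans h2.le (le_csSup (bddAbove_of_subset_Iio Set.inter_subset_right)
      ⟨h1, hFAlt⟩)
  have hsupB : sSup (B ∩ Set.Iio β) = β := by
    refine le_antisymm (sSup_inter_Iio_le _ _) ?_
    rw [hβ]
    refine csSup_le (Set.range_nonempty g) ?_
    rintro x ⟨n, rfl⟩
    have h1 : g (n + 1) ∈ B := (main (n+1)).2.2
    have h2 : g (n + 1) < β := lt_of_lt_of_le (hmono (n+1)) (hle_iSup (n+2))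
    exact le_trans (hmono n).le (le_csSup (bddAbove_of_subset_Iio Set.inter_subset_right)
      ⟨h1, h2⟩)
  exact ⟨β, hβδ, hγβ, ⟨hA.2.2 β hβδ h0β hsupA, hsupA⟩, ⟨hB.2.2 β hβδ h0β hsupB, hsupB⟩⟩

lemma IsClubIn.inter {A B : Set Ordinal.{0}} {δ : Ordinal.{0}} (hA : IsClubIn A δ)
    (hB : IsClubIn B δ) (hδ : Order.IsSuccLimit δ) (hcof : ℵ₀ < δ.cof) : IsClubIn (A ∩ B) δ := by
  refine ⟨fun x hx => hA.1 hx.1, ?_, ?_⟩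
  · intro γ hγ
    obtain ⟨β, hβδ, hγβ, hβA, hβB⟩ := exists_common_limitPt hA hB hδ hcof hγ
    exact ⟨β, ⟨hβA.1, hβB.1⟩, hγβ.le⟩
  · intro γ hγ h0 hsup
    exact ⟨hA.2.2 γ hγ h0 (sSup_inter_eq_of_subset Set.inter_subset_left h0 hsup),
      hB.2.2 γ hγ h0 (sSup_inter_eq_of_subset Set.inter_subset_right h0 hsup)⟩

lemma limitPts_club {C : Set Ordinal.{0}} {δ : Ordinal.{0}} (hC : IsClubIn C δ)
    (hδ : Order.IsSuccLimit δ) (hcof : ℵ₀ < δ.cof) : IsClubIn {γ | IsLimitPt γ C} δ := by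
  refine ⟨fun x hx => hC.1 hx.1, ?_, ?_⟩
  · intro γ hγ
    obtain ⟨β, hβδ, hγβ, hβC, _⟩ := exists_common_limitPt hC hC hδ hcof hγ
    exact ⟨β, hβC, hγβ.le⟩
  · intro γ hγ h0 hsup
    have hsub : {γ | IsLimitPt γ C} ⊆ C := fun x hx => hx.1
    have hsup' : sSup (C ∩ Set.Iio γ) = γ := sSup_inter_eq_of_subset hsub h0 hsup
    exact ⟨hC.2.2 γ hγ h0 hsup', hsup'⟩

lemma restrict_club {D : Set Ordinal.{0}} {δ γ : Ordinal.{0}} (hD : IsClubIn D δ)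
    (hγ : IsLimitPt γ D) : IsClubIn (D ∩ Set.Iio γ) γ := by
  have hγδ : γ < δ := hD.1 hγ.1
  refine ⟨fun x hx => hx.2, ?_, ?_⟩
  · intro x hx
    have hne : (D ∩ Set.Iio γ).Nonempty := by
      by_contra hne
      rw [Set.not_nonempty_iff_eq_empty] at hne
      have h2 := hγ.2
      rw [hne, csSup_empty] at h2
      have : γ = 0 := h2.symm
      subst this
      exact absurd hx (by simp)
    obtain ⟨y, hy, hxy⟩ := exists_lt_of_lt_csSup hne (hγ.2 ▸ hx)
    exact ⟨y, hy, hxy.le⟩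
  · intro x hx h0x hsup
    have : D ∩ Set.Iio γ ∩ Set.Iio x = D ∩ Set.Iio x := by
      ext y
      constructor
      · rintro ⟨⟨h1, _⟩, h3⟩; exact ⟨h1, h3⟩
      · rintro ⟨h1, h2⟩; exact ⟨⟨h1, h2.trans hx⟩, h2⟩
    rw [this] at hsup
    exact ⟨hD.2.2 x (hx.trans hγδ) h0x hsup, hx⟩

lemma tail_club {γ₀ δ : Ordinal.{0}} (hγ₀ : γ₀ < δ) (hδ : Order.IsSuccLimit δ) :
    IsClubIn (Set.Ioi γ₀ ∩ Set.Iio δ) δ := by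
  refine ⟨fun x hx => hx.2, ?_, ?_⟩
  · intro x hx
    refine ⟨max (Order.succ γ₀) x, ⟨?_, ?_⟩, le_max_right _ _⟩
    · exact lt_of_lt_of_le (Order.lt_succ γ₀) (le_max_left _ _)
    · exact max_lt (hδ.succ_lt hγ₀) hx
  · intro x hx h0 hsup
    obtain ⟨y, ⟨hy1, _⟩, hy3⟩ := nonempty_of_sSup_pos (hsup ▸ h0)
    exact ⟨(hy1.trans hy3 : γ₀ < x), hx⟩

lemma otp_mono {C D : Set Ordinal.{0}} (h : C ⊆ D) : otp C ≤ otp D := by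
  rw [otp, otp, Ordinal.type_le_iff']
  exact ⟨⟨⟨Set.inclusion h, Set.inclusion_injective h⟩, Iff.rfl⟩⟩

/-- In a club in a limit ordinal of cofinality `> θ`, there is a point of
cofinality `θ`. -/
lemma exists_cof_pt {G : Set Ordinal.{0}} {α₀ : Ordinal.{0}} {θ kap : Cardinal}
    (hG : IsClubIn G α₀) (hα : α₀.cof = kap) (hθ : θ.IsRegular) (hθk : θ < kap) :
    ∃ β ∈ G, β.cof = θ := by
  have hα₀lim : Order.IsSuccLimit α₀ := Ordinal.aleph0_le_cof.mp (by
    rw [hα]; exact hθ.aleph0_le.trans hθk.le)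
  set G' := G ∪ Set.Ici α₀ with hG'
  have hnb : ¬ BddAbove G' := by
    rintro ⟨b, hb⟩
    have hmem : max (Order.succ b) α₀ ∈ G' := Or.inr (le_max_right _ _ : α₀ ≤ max (Order.succ b) α₀)
    have := hb hmem
    exact absurd ((Order.lt_succ b).trans_le (le_max_left _ _)) (not_lt.mpr this)
  have hG'lt : ∀ x ∈ G', x < α₀ → x ∈ G := by
    rintro x (hx | hx) hlt
    · exact hx
    · exact absurd hlt (not_lt.mpr hx)
  have hclosed : IsClosed G' := by
    rw [Ordinal.isClosed_iff_iSup]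
    intro ι hι f hf
    set β := ⨆ i, f i with hβ
    by_cases hβα : α₀ ≤ β
    · exact Or.inr hβα
    push_neg at hβα
    by_cases hmem : β ∈ Set.range f
    · obtain ⟨i, hi⟩ := hmem
      exact hi ▸ hf i
    · have hfG : ∀ i, f i ∈ G := by
        intro i
        refine hG'lt _ (hf i) ?_
        calc f i ≤ β := le_csSup (Ordinal.bddAbove_range f) ⟨i, rfl⟩
          _ < α₀ := hβα
      have : IsLimitPt (sSup (Set.range f)) G := isLimitPt_sSup hG
        (by rintro x ⟨i, rfl⟩; exact hfG i) (Set.range_nonempty f) hmem hβα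
      exact Or.inl this.1
  have hnormal : Order.IsNormal (Ordinal.enumOrd G') :=
    (Ordinal.enumOrd_isNormal_iff_isClosed hnb).mpr hclosed
  have claim : ∀ i, i ≤ θ.ord → Ordinal.enumOrd G' i < α₀ := by
    intro i
    induction i using Ordinal.induction with
    | _ i IH =>
      intro hi
      rcases Ordinal.zero_or_succ_or_isSuccLimit i with h0 | ⟨k, hk⟩ | hlim
      · subst h0
        obtain ⟨g, hg, _⟩ := hG.2.1 0 hα₀lim.pos
        have := Ordinal.enumOrd_le_of_forall_lt (s := G') (Set.mem_union_left _ hg)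
          (fun b hb => absurd hb (not_lt_zero (a := b)))
        exact lt_of_le_of_lt this (hG.1 hg)
      · subst hk
        have hk' : k < Order.succ k := Order.lt_succ k
        have hkθ : k ≤ θ.ord := le_of_lt (lt_of_lt_of_le hk' hi)
        have hek : Ordinal.enumOrd G' k < α₀ := IH k hk' hkθ
        obtain ⟨g, hg, hgk⟩ := hG.exists_gt hα₀lim hek
        have := Ordinal.enumOrd_succ_le hnb (Set.mem_union_left _ hg) hgk
        exact lt_of_le_of_lt this (hG.1 hg)
      · have hblt : ∀ k (h : k < i), Ordinal.enumOrd G' k < α₀ :=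
          fun k h => IH k h (le_of_lt (lt_of_lt_of_le h hi))
        have hbeq : (Ordinal.bsup i fun k _ => Ordinal.enumOrd G' k) =
            Ordinal.enumOrd G' i := Ordinal.IsNormal.bsup_eq hnormal hlim
        have hble : (Ordinal.bsup i fun k _ => Ordinal.enumOrd G' k) ≤ α₀ :=
          Ordinal.bsup_le fun k h => (hblt k h).le
        rcases lt_or_eq_of_le hble with hlt | heq
        · exact hbeq ▸ hlt
        · exfalso
          have hcof : α₀.cof ≤ i.card := by
            have := Ordinal.cof_bsup_le (o := i)
              (f := fun k _ => Ordinal.enumOrd G' k)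
              (fun k h => by rw [heq]; exact hblt k h)
            rwa [heq] at this
          rw [hα] at hcof
          have : kap ≤ θ := by
            calc kap ≤ i.card := hcof
              _ ≤ θ.ord.card := Ordinal.card_le_card hi
              _ = θ := Cardinal.card_ord θ
          exact absurd hθk (not_lt.mpr this)
  refine ⟨Ordinal.enumOrd G' θ.ord, ?_, ?_⟩
  · exact hG'lt _ (Ordinal.enumOrd_mem hnb θ.ord) (claim θ.ord le_rfl)
  · rw [Ordinal.cof_map_of_isNormal hnormal (Cardinal.isSuccLimit_ord hθ.aleph0_le), Cardinal.IsRegular.cof_eq hθ]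

/-- Proposition 5.5: if `θ < kap < lam` are infinite regular cardinals, then
`□^kap(lam)` implies `□^θ(lam)`. -/
theorem statement7 (θ kap lam : Cardinal.{0}) (hθ : θ.IsRegular)
    (hk : kap.IsRegular) (hl : lam.IsRegular) (h1 : θ < kap) (h2 : kap < lam)
    (h : SqSup lam kap) : SqSup lam θ := by
  obtain ⟨sq, hstat⟩ := h
  refine ⟨sq, ?_⟩
  intro D hD
  have hθ0 : ℵ₀ ≤ θ := hθ.aleph0_le
  have hcofδ : lam.ord.cof = lam := hl.cof_eq
  have hδlim : Order.IsSuccLimit lam.ord := Cardinal.isSuccLimit_ord (hθ0.trans (h1.le.trans h2.le))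
  have hcofδ' : ℵ₀ < lam.ord.cof := by
    rw [hcofδ]; exact lt_of_le_of_lt hθ0 (h1.trans h2)
  have hE : IsClubIn {γ | IsLimitPt γ D} lam.ord := limitPts_club hD hδlim hcofδ'
  obtain ⟨α₀, ⟨hα₀δ, hα₀cof, hα₀otp⟩, hα₀E⟩ := hstat _ hE
  have hα₀lim : Order.IsSuccLimit α₀ := Ordinal.aleph0_le_cof.mp (by
    rw [hα₀cof]; exact hθ0.trans h1.le)
  have hcofα' : ℵ₀ < α₀.cof := by rw [hα₀cof]; exact lt_of_le_of_lt hθ0 h1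
  have hCclub := sq.club α₀ hα₀δ hα₀lim
  have hA : IsClubIn (D ∩ Set.Iio α₀) α₀ := restrict_club hD hα₀E
  have hB : IsClubIn {γ | IsLimitPt γ (sq.C α₀)} α₀ := limitPts_club hCclub hα₀lim hcofα'
  obtain ⟨γ₀, hγ₀α, hγ₀otp⟩ := Ordinal.lt_lift_iff.mp hα₀otp
  have hT : IsClubIn (Set.Ioi γ₀ ∩ Set.Iio α₀) α₀ := tail_club hγ₀α hα₀lim
  have hG : IsClubIn ((D ∩ Set.Iio α₀) ∩ {γ | IsLimitPt γ (sq.C α₀)} ∩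
      (Set.Ioi γ₀ ∩ Set.Iio α₀)) α₀ :=
    (hA.inter hB hα₀lim hcofα').inter hT hα₀lim hcofα'
  obtain ⟨β, hβG, hβcof⟩ := exists_cof_pt hG hα₀cof hθ h1
  obtain ⟨⟨⟨hβD, hβα⟩, hβB⟩, hβγ₀, _⟩ := hβG
  have hβlim : Order.IsSuccLimit β := Ordinal.aleph0_le_cof.mp (by rw [hβcof]; exact hθ0)
  have hcoh : sq.C α₀ ∩ Set.Iio β = sq.C β :=
    sq.coherent β α₀ hβα hα₀δ hβlim hα₀lim hβB
  refine ⟨β, ⟨hβα.trans hα₀δ, hβcof, ?_⟩, hβD⟩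
  calc otp (sq.C β) = otp (sq.C α₀ ∩ Set.Iio β) := by rw [hcoh]
    _ ≤ otp (sq.C α₀) := otp_mono Set.inter_subset_left
    _ = Ordinal.lift.{1} γ₀ := hγ₀otp.symm
    _ < Ordinal.lift.{1} β := Ordinal.lift_lt.mpr hβγ₀

end Paper
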